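/- Let T be a Laver tree and f : [T] → 2^ω a continuous function. Then for every n ∈ ω and every τ ∈ T with stem(T) ⊆ τ, there exist a Laver tree T' ⊆ T_τ with stem(T') = stem(T_τ) and a binary string s ∈ 2^n such that f(y) extends s for every y ∈ [T'] (i.e. [T'] ⊆ f⁻¹([s]), where [s] = {x ∈ 2^ω : s ⊆ x}). -/

import Mathlib

/-!
Call a node `t` of `T` *decided* if some Laver tree with stem `t` inside `T_t` fixes the first
`n` bits of `f` on all its branches. If infinitely many successors `t⌢k` are decided then, as
there are only `2^n` binary strings of length `n`, infinitely many of them decide the same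
string, and the union of their trees decides `t`. So an undecided node has infinitely many
undecided successors, and from an undecided `τ` we build a branch `y` of `T` all of whose nodes
beyond `τ` are undecided. Continuity of `f` at `y` gives a node `y↾m` such that all branches of
`T` through it agree with `f y` on the first `n` bits; then `T_{y↾m}` decides `y↾m`, which is
absurd.
-/

/-- The restriction `x↾n` of a sequence `x ∈ ω^ω` to its first `n` values, as a finite sequence. -/
def seqRestrict (x : ℕ → ℕ) (n : ℕ) : List ℕ := List.ofFn fun i : Fin n => x i

/-- A tree on `ω`: a nonempty set of finite sequences closed under initial segments. -/
def IsSeqTree (T : Set (List ℕ)) : Prop :=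
  T.Nonempty ∧ ∀ s ∈ T, ∀ t : List ℕ, t <+: s → t ∈ T

/-- `[T]`, the set of branches of a tree `T ⊆ ω^{<ω}`. -/
def branches (T : Set (List ℕ)) : Set (ℕ → ℕ) := {x | ∀ n : ℕ, seqRestrict x n ∈ T}

/-- `S` and `T` are compatible in `𝕋` (ordered by inclusion) if they have a common extension. -/
def Compat (𝕋 : Set (Set (List ℕ))) (S T : Set (List ℕ)) : Prop :=
  ∃ R ∈ 𝕋, R ⊆ S ∧ R ⊆ T

/-- `T` is a Laver tree with stem `st`: `st ∈ T` is comparable with every node of `T`, and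
every node extending `st` has infinitely many immediate successors in `T`. -/
def IsLaverWithStem (T : Set (List ℕ)) (st : List ℕ) : Prop :=
  IsSeqTree T ∧ st ∈ T ∧ (∀ t ∈ T, t <+: st ∨ st <+: t) ∧
    ∀ t ∈ T, st <+: t → {n : ℕ | t ++ [n] ∈ T}.Infinite

/-- A Laver tree. -/
def IsLaver (T : Set (List ℕ)) : Prop := ∃ st : List ℕ, IsLaverWithStem T st

open Set PiNat

lemma seqRestrict_length (x : ℕ → ℕ) (m : ℕ) : (seqRestrict x m).length = m := by
  simp [seqRestrict]

lemma seqRestrict_prefix (x : ℕ → ℕ) {a b : ℕ} (h : a ≤ b) :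
    seqRestrict x a <+: seqRestrict x b := by
  rw [List.prefix_iff_eq_take]
  apply List.ext_getElem (by simp [seqRestrict_length, h])
  intro i _ _
  simp [seqRestrict]

lemma ofFn_eq_ofFn_iff_mem_cylinder {α : Type*} {x y : ℕ → α} {n : ℕ} :
    (List.ofFn fun i : Fin n => x i) = List.ofFn (fun i : Fin n => y i) ↔ x ∈ cylinder y n := by
  simp [List.ofFn_inj, funext_iff, mem_cylinder_iff, Fin.forall_iff]

theorem ContinuousOn.exists_mapsTo_cylinder {E F : ℕ → Type*} [∀ i, TopologicalSpace (E i)]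
    [∀ i, DiscreteTopology (E i)] [∀ i, TopologicalSpace (F i)] [∀ i, DiscreteTopology (F i)]
    {f : (∀ i, E i) → ∀ i, F i} {A : Set (∀ i, E i)} (hf : ContinuousOn f A) {y : ∀ i, E i}
    (hy : y ∈ A) (n : ℕ) : ∃ m, MapsTo f (cylinder y m ∩ A) (cylinder (f y) n) := by
  have hpre : f ⁻¹' cylinder (f y) n ∈ nhdsWithin y A :=
    hf y hy ((isOpen_cylinder F _ n).mem_nhds (self_mem_cylinder _ n))
  obtain ⟨V, hV, hyV, hVA⟩ := mem_nhdsWithin.1 hpre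
  obtain ⟨_, ⟨x, m, rfl⟩, hyx, hxV⟩ :=
    (isTopologicalBasis_cylinders E).exists_subset_of_mem_open hyV hV
  rw [← mem_cylinder_iff_eq.1 hyx] at hxV
  exact ⟨m, fun z hz => hVA ⟨hxV hz.1, hz.2⟩⟩

/-- The paper's `T_t`. -/
def throughNode (T : Set (List ℕ)) (t : List ℕ) : Set (List ℕ) := {u ∈ T | t <+: u ∨ u <+: t}

lemma branches_mono {S T : Set (List ℕ)} (h : S ⊆ T) : branches S ⊆ branches T :=
  fun _ hy n => h (hy n)

lemma mem_cylinder_of_mem_branches_throughNode {T : Set (List ℕ)} {x y : ℕ → ℕ} {k : ℕ}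
    (hx : x ∈ branches (throughNode T (seqRestrict y k))) : x ∈ cylinder y k := by
  have hlen : (seqRestrict x k).length = (seqRestrict y k).length := by
    simp only [seqRestrict_length]
  refine ofFn_eq_ofFn_iff_mem_cylinder.1 ?_
  rcases (hx k).2 with h | h
  · exact (h.eq_of_length hlen.symm).symm
  · exact h.eq_of_length hlen

namespace IsLaverWithStem

variable {T : Set (List ℕ)} {st : List ℕ}

lemma mem_of_prefix (hT : IsLaverWithStem T st) {u v : List ℕ} (hu : u ∈ T) (hv : v <+: u) :
    v ∈ T :=
  hT.1.2 u hu v hv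

lemma stem_prefix_of_length_le (hT : IsLaverWithStem T st) {u : List ℕ} (hu : u ∈ T)
    (hlen : st.length ≤ u.length) : st <+: u := by
  rcases hT.2.2.1 u hu with h | h
  · rw [h.eq_of_length (le_antisymm h.length_le hlen)]
  · exact h

lemma seqRestrict_stem_length (hT : IsLaverWithStem T st) {y : ℕ → ℕ} {m : ℕ}
    (hy : seqRestrict y m ∈ T) (hm : st.length ≤ m) : seqRestrict y st.length = st := by
  have hst := hT.stem_prefix_of_length_le hy (by rwa [seqRestrict_length])
  refine (List.prefix_of_prefix_length_le (seqRestrict_prefix y hm) hst ?_).eq_of_length ?_ <;>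
    simp [seqRestrict_length]

lemma throughNode (hT : IsLaverWithStem T st) {t : List ℕ} (ht : t ∈ T) (hst : st <+: t) :
    IsLaverWithStem (throughNode T t) t := by
  refine ⟨⟨⟨t, ht, .inl (List.prefix_refl t)⟩, ?_⟩, ⟨ht, .inl (List.prefix_refl t)⟩,
    fun u hu => hu.2.symm, ?_⟩
  · rintro u ⟨hu, hut⟩ v hv
    refine ⟨hT.mem_of_prefix hu hv, ?_⟩
    rcases hut with h | h
    · exact List.prefix_or_prefix_of_prefix h hv
    · exact .inr (hv.trans h)
  · rintro u ⟨hu, -⟩ htu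
    refine (hT.2.2.2 u hu (hst.trans htu)).mono fun k hk => ⟨hk, .inl ?_⟩
    exact htu.trans (List.prefix_append u [k])

variable {K : Set ℕ} {S : ℕ → Set (List ℕ)} {t : List ℕ}

lemma biUnion (hK : K.Infinite) (hS : ∀ k ∈ K, IsLaverWithStem (S k) (t ++ [k])) :
    IsLaverWithStem (⋃ k ∈ K, S k) t := by
  have ht : ∀ k ∈ K, t ∈ S k := fun k hk =>
    (hS k hk).mem_of_prefix (hS k hk).2.1 (List.prefix_append t [k])
  obtain ⟨k₀, hk₀⟩ := hK.nonempty
  refine ⟨⟨⟨t, mem_biUnion hk₀ (ht k₀ hk₀)⟩, ?_⟩, mem_biUnion hk₀ (ht k₀ hk₀), ?_, ?_⟩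
  · intro u hu v hv
    obtain ⟨k, hk, hu⟩ := mem_iUnion₂.1 hu
    exact mem_biUnion hk ((hS k hk).mem_of_prefix hu hv)
  · intro u hu
    obtain ⟨k, hk, hu⟩ := mem_iUnion₂.1 hu
    rcases (hS k hk).2.2.1 u hu with h | h
    · exact (List.prefix_concat_iff.1 h).elim (fun h => .inr (h ▸ List.prefix_append t [k])) .inl
    · exact .inr ((List.prefix_append t [k]).trans h)
  · intro u hu htu
    obtain ⟨k, hk, hu⟩ := mem_iUnion₂.1 hu
    obtain h | rfl : t ++ [k] <+: u ∨ u = t := by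
      rcases (hS k hk).2.2.1 u hu with h | h
      · rcases List.prefix_concat_iff.1 h with rfl | h
        · exact .inl (List.prefix_refl _)
        · exact .inr (h.eq_of_length (le_antisymm h.length_le htu.length_le))
      · exact .inl h
    · exact ((hS k hk).2.2.2 u hu h).mono fun j hj => mem_biUnion hk hj
    · exact hK.mono fun j hj => mem_biUnion hj (hS j hj).2.1

lemma exists_mem_branches_of_mem_branches_biUnion
    (hS : ∀ k ∈ K, IsLaverWithStem (S k) (t ++ [k])) {y : ℕ → ℕ}
    (hy : y ∈ branches (⋃ k ∈ K, S k)) : ∃ k ∈ K, y ∈ branches (S k) := by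
  have hnode : ∀ m, t.length + 1 ≤ m → ∀ k ∈ K, seqRestrict y m ∈ S k →
      seqRestrict y (t.length + 1) = t ++ [k] := fun m hm k hk hyk => by
    simpa using (hS k hk).seqRestrict_stem_length hyk (by simpa using hm)
  obtain ⟨k, hk, hyk⟩ := mem_iUnion₂.1 (hy (t.length + 1))
  refine ⟨k, hk, fun m => ?_⟩
  obtain ⟨j, hj, hyj⟩ := mem_iUnion₂.1 (hy (max m (t.length + 1)))
  have hjk : j = k := by
    simpa using (hnode _ (le_max_right _ _) j hj hyj).symm.trans (hnode _ le_rfl k hk hyk)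
  exact (hS k hk).mem_of_prefix (hjk ▸ hyj) (seqRestrict_prefix y (le_max_left _ _))

end IsLaverWithStem

def DecidesPrefix (T : Set (List ℕ)) (f : (ℕ → ℕ) → ℕ → Bool) (n : ℕ) (t : List ℕ)
    (s : List Bool) : Prop :=
  ∃ T', IsLaverWithStem T' t ∧ T' ⊆ throughNode T t ∧
    ∀ y ∈ branches T', (List.ofFn fun i : Fin n => f y i) = s

def PrefixDecidable (T : Set (List ℕ)) (f : (ℕ → ℕ) → ℕ → Bool) (n : ℕ) (t : List ℕ) : Prop :=
  ∃ s : List Bool, s.length = n ∧ DecidesPrefix T f n t s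

lemma DecidesPrefix.of_infinite {T : Set (List ℕ)} {f : (ℕ → ℕ) → ℕ → Bool} {n : ℕ}
    {t : List ℕ} {s : List Bool} {K : Set ℕ} (hK : K.Infinite)
    (h : ∀ k ∈ K, DecidesPrefix T f n (t ++ [k]) s) : DecidesPrefix T f n t s := by
  choose! S hS hST hSs using h
  have hU := IsLaverWithStem.biUnion hK hS
  refine ⟨⋃ k ∈ K, S k, hU, fun u hu => ⟨?_, (hU.2.2.1 u hu).symm⟩, fun y hy => ?_⟩
  · obtain ⟨k, hk, hu⟩ := mem_iUnion₂.1 hu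
    exact (hST k hk hu).1
  · obtain ⟨k, hk, hyk⟩ := IsLaverWithStem.exists_mem_branches_of_mem_branches_biUnion hS hy
    exact hSs k hk y hyk

lemma IsLaverWithStem.infinite_not_prefixDecidable_succ {T : Set (List ℕ)} {st : List ℕ}
    (hT : IsLaverWithStem T st) (f : (ℕ → ℕ) → ℕ → Bool) (n : ℕ) {t : List ℕ} (ht : t ∈ T)
    (hst : st <+: t) (hbad : ¬ PrefixDecidable T f n t) :
    {k | t ++ [k] ∈ T ∧ ¬ PrefixDecidable T f n (t ++ [k])}.Infinite := by
  intro hfin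
  have hcover : {k | t ++ [k] ∈ T} ⊆ {k | t ++ [k] ∈ T ∧ ¬ PrefixDecidable T f n (t ++ [k])} ∪
      ⋃ s ∈ {s : List Bool | s.length = n}, {k | DecidesPrefix T f n (t ++ [k]) s} := by
    intro k hk
    by_cases hdec : PrefixDecidable T f n (t ++ [k])
    · obtain ⟨s, hs, hks⟩ := hdec
      exact .inr (mem_biUnion hs hks)
    · exact .inl ⟨hk, hdec⟩
  obtain ⟨s, hs, hK⟩ : ∃ s ∈ {s : List Bool | s.length = n},
      {k | DecidesPrefix T f n (t ++ [k]) s}.Infinite := by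
    by_contra! hfin'
    exact hT.2.2.2 t ht hst
      ((hfin.union ((List.finite_length_eq Bool n).biUnion hfin')).subset hcover)
  exact hbad ⟨s, hs, .of_infinite hK fun _ hk => hk⟩

lemma exists_seqRestrict_of_forall_exists_append {P : List ℕ → Prop}
    (h : ∀ t, P t → ∃ k, P (t ++ [k])) {τ : List ℕ} (hτ : P τ) :
    ∃ y : ℕ → ℕ, ∀ m, P (seqRestrict y (τ.length + m)) := by
  choose! F hF using h
  let u : ℕ → List ℕ := fun m => (fun t => t ++ [F t])^[m] τ
  have hsucc : ∀ m, u (m + 1) = u m ++ [F (u m)] := fun m => Function.iterate_succ_apply' _ m τ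
  have hP : ∀ m, P (u m) := fun m => by
    induction m with
    | zero => exact hτ
    | succ m ih => rw [hsucc]; exact hF _ ih
  have hlen : ∀ m, (u m).length = τ.length + m := fun m => by
    induction m with
    | zero => rfl
    | succ m ih => simp [hsucc, ih, Nat.add_assoc]
  have hmono : ∀ {a b}, a ≤ b → u a <+: u b := fun hab => by
    induction hab with
    | refl => exact List.prefix_refl _
    | step _ ih => rw [hsucc]; exact ih.trans (List.prefix_append _ _)
  refine ⟨fun i => (u (i + 1)).getD i 0, fun m => ?_⟩
  convert hP m using 1
  refine List.ext_getElem (by simp [seqRestrict_length, hlen]) fun i hi hi' => ?_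
  have hi₁ : i < (u (i + 1)).length := by rw [hlen]; omega
  simp only [seqRestrict, List.getElem_ofFn, List.getD_eq_getElem _ _ hi₁]
  rw [(hmono (Nat.le_add_left (i + 1) m)).getElem, (hmono (Nat.le_add_right m (i + 1))).getElem]

/-- Pure decision for Laver forcing (Claim 1 of Gray's theorem): if `T` is a Laver tree with
stem `st`, `f : [T] → 2^ω` is continuous, `n ∈ ω`, and `τ ∈ T` extends `st`, then there are a
Laver tree `T' ⊆ T_τ` whose stem is `stem(T_τ) = τ` and a binary string `s` of length `n`
such that `s ⊆ f(y)` for every branch `y` of `T'`, i.e. `[T'] ⊆ f⁻¹([s])`. -/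
theorem laver_pure_decision (T : Set (List ℕ)) (st : List ℕ)
    (hT : IsLaverWithStem T st)
    (f : (ℕ → ℕ) → (ℕ → Bool)) (hf : ContinuousOn f (branches T))
    (n : ℕ) (τ : List ℕ) (hτ : τ ∈ T) (hstem : st <+: τ) :
    ∃ (T' : Set (List ℕ)) (s : List Bool),
      IsLaverWithStem T' τ ∧
      T' ⊆ {t ∈ T | τ <+: t ∨ t <+: τ} ∧
      s.length = n ∧
      ∀ y ∈ branches T', (List.ofFn fun i : Fin n => f y i) = s := by
  suffices h : PrefixDecidable T f n τ by
    obtain ⟨s, hs, T', hT', hsub, hdec⟩ := h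
    exact ⟨T', s, hT', hsub, hs, hdec⟩
  by_contra hbad
  let P (t : List ℕ) : Prop := t ∈ T ∧ st <+: t ∧ ¬ PrefixDecidable T f n t
  have hstep : ∀ t, P t → ∃ k, P (t ++ [k]) := fun t ⟨ht, hst, hb⟩ => by
    obtain ⟨k, hkT, hk⟩ := (hT.infinite_not_prefixDecidable_succ f n ht hst hb).nonempty
    exact ⟨k, hkT, hst.trans (List.prefix_append t [k]), hk⟩
  obtain ⟨y, hy⟩ := exists_seqRestrict_of_forall_exists_append hstep ⟨hτ, hstem, hbad⟩
  have hyT : y ∈ branches T := fun m => hT.mem_of_prefix (hy m).1 (seqRestrict_prefix y (by omega))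
  obtain ⟨m, hm⟩ := hf.exists_mapsTo_cylinder hyT n
  obtain ⟨ht, hst, hbad'⟩ := hy m
  refine hbad' ⟨List.ofFn fun i : Fin n => f y i, List.length_ofFn, _,
    hT.throughNode ht hst, subset_rfl, fun x hx => ?_⟩
  have hxy := cylinder_anti y (Nat.le_add_left m τ.length)
    (mem_cylinder_of_mem_branches_throughNode hx)
  exact ofFn_eq_ofFn_iff_mem_cylinder.2 (hm ⟨hxy, branches_mono (fun _ hu => hu.1) hx⟩)
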